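/- (First-variation conditions for the spherical pendulum.) Fix m, l, g > 0, ρ ∈ ℝ with ρ ≠ 0 and ρ ≠ m, c ∈ ℝ, and a differentiable function Φ : ℝ³ → ℝ. On ℝ⁸ with coordinates (Ω₁, Ω₂, v, Γ) ∈ ℝ × ℝ × ℝ³ × ℝ³, define p = (ρ v₁ + m l Ω₂, ρ v₂ − m l Ω₁, ρ v₃), E⁰ = ½ m l² (Ω₁² + Ω₂²) + m l (v₁ Ω₂ − v₂ Ω₁) + ½ ρ ‖v‖² + m g l Γ₃, 𝓔 = ½ m l² (Ω₁² + Ω₂²) + m (ρ/(ρ − m)) g l Γ₃, and E = E⁰ + c 𝓔 + Φ(‖p‖², p·Γ, ‖Γ‖²). Then the derivative of E vanishes at the equilibrium (Ω₁, Ω₂, v, Γ) = (0, 0, 0, e₃) if and only if D₂Φ(0,0,1) = 0 and D₃Φ(0,0,1) = m g l (m − (1 + c) ρ)/(2(ρ − m)), where D₂Φ and D₃Φ denote the partial derivatives of Φ in its second and third arguments. -/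

import Mathlib

/-!
At the upright equilibrium the momentum `p` vanishes and `Γ = e₃`, so along any line
`x₀ + t δ`, `δ = (a, b, w, γ)`, the function `E` is a quadratic polynomial in `t` plus `Φ` of a
quadratic curve through `(0, 0, 1)`. Only the first-order coefficients matter: the energy part
contributes `M γ₃` with `M = mgl + c m (ρ/(ρ−m)) g l`, and the Casimirs move with velocity
`(0, ρ w₃, 2 γ₃)`, since `‖p‖²` is quadratic in `t`. Hence
`dE(x₀) δ = M γ₃ + ρ w₃ D₂Φ + 2 γ₃ D₃Φ`, which vanishes for all `δ` iff `D₂Φ = 0` and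
`M + 2 D₃Φ = 0`.
-/

open Matrix

/-- The energy–Casimir function `E = E⁰ + c 𝓔 + Φ(‖p‖², p·Γ, ‖Γ‖²)` for the spherical
pendulum on a movable base, on `ℝ⁸` with coordinates `(Ω₁, Ω₂, v, Γ)`, where
`p = (ρv₁ + mlΩ₂, ρv₂ − mlΩ₁, ρv₃)`,
`E⁰ = ½ml²(Ω₁² + Ω₂²) + ml(v₁Ω₂ − v₂Ω₁) + ½ρ‖v‖² + mglΓ₃` and
`𝓔 = ½ml²(Ω₁² + Ω₂²) + m(ρ/(ρ−m))glΓ₃`. -/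
noncomputable def ECfun (m l g ρ c : ℝ) (Φ : (Fin 3 → ℝ) → ℝ)
    (x : ℝ × ℝ × (Fin 3 → ℝ) × (Fin 3 → ℝ)) : ℝ :=
  let Ω₁ := x.1; let Ω₂ := x.2.1; let v := x.2.2.1; let Γ := x.2.2.2
  let p : Fin 3 → ℝ := ![ρ * v 0 + m * l * Ω₂, ρ * v 1 - m * l * Ω₁, ρ * v 2]
  (1 / 2) * m * l ^ 2 * (Ω₁ ^ 2 + Ω₂ ^ 2) + m * l * (v 0 * Ω₂ - v 1 * Ω₁)
    + (1 / 2) * ρ * (v ⬝ᵥ v) + m * g * l * Γ 2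
    + c * ((1 / 2) * m * l ^ 2 * (Ω₁ ^ 2 + Ω₂ ^ 2) + m * (ρ / (ρ - m)) * g * l * Γ 2)
    + Φ ![p ⬝ᵥ p, p ⬝ᵥ Γ, Γ ⬝ᵥ Γ]

theorem hasDerivAt_quadratic_curve {E : Type*} [NormedAddCommGroup E] [NormedSpace ℝ E]
    (a b c : E) : HasDerivAt (fun t : ℝ => a + t • b + t ^ 2 • c) b 0 := by
  have hlin : HasDerivAt (fun t : ℝ => t • b) b 0 := by
    simpa using (hasDerivAt_id (0 : ℝ)).smul_const b
  have hsq : HasDerivAt (fun t : ℝ => t ^ 2 • c) 0 0 := by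
    simpa using (hasDerivAt_pow 2 (0 : ℝ)).smul_const c
  have h := (hlin.const_add a).add hsq
  rwa [add_zero] at h

theorem vecCons_three_eq_add_single (u v w : ℝ) :
    (![u, v, w] : Fin 3 → ℝ) = u • Pi.single 0 1 + v • Pi.single 1 1 + w • Pi.single 2 1 := by
  ext i; fin_cases i <;> simp

section ECfun

variable (m l g ρ c : ℝ) (Φ : (Fin 3 → ℝ) → ℝ)

/-- The coefficient of `Γ₃` in `E⁰ + c 𝓔`. -/
noncomputable def potentialCoeff : ℝ := m * g * l + c * (m * (ρ / (ρ - m)) * g * l)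

theorem differentiable_ECfun (hΦ : Differentiable ℝ Φ) : Differentiable ℝ (ECfun m l g ρ c Φ) := by
  unfold ECfun
  simp only [dotProduct, Fin.sum_univ_three]
  refine Differentiable.add (by fun_prop) (hΦ.comp ?_)
  rw [differentiable_pi]
  intro i
  fin_cases i <;> simp only [Fin.zero_eta, Fin.mk_one, Fin.reduceFinMk, cons_val] <;> fun_prop

theorem ECfun_add_smul (a b : ℝ) (w γ : Fin 3 → ℝ) :
    ∃ (A : ℝ) (C : Fin 3 → ℝ), ∀ t : ℝ,
      ECfun m l g ρ c Φ ((0, 0, 0, ![0, 0, 1]) + t • (a, b, w, γ)) =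
        potentialCoeff m l g ρ c
          + t • (potentialCoeff m l g ρ c * γ 2) + t ^ 2 • A
        + Φ (![0, 0, 1] + t • ![0, ρ * w 2, 2 * γ 2] + t ^ 2 • C) := by
  set q : Fin 3 → ℝ := ![ρ * w 0 + m * l * b, ρ * w 1 - m * l * a, ρ * w 2]
  unfold potentialCoeff
  refine ⟨(1 + c) * ((1 / 2) * m * l ^ 2 * (a ^ 2 + b ^ 2)) + m * l * (w 0 * b - w 1 * a)
      + (1 / 2) * ρ * (w ⬝ᵥ w), ![q ⬝ᵥ q, q ⬝ᵥ γ, γ ⬝ᵥ γ], fun t => ?_⟩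
  simp only [ECfun, q, Prod.fst_add, Prod.snd_add, Prod.smul_fst, Prod.smul_snd, Pi.add_apply,
    Pi.smul_apply, smul_eq_mul, dotProduct, Fin.sum_univ_three, Pi.zero_apply]
  congr 1
  · simp only [Fin.isValue, cons_val, zero_add]; ring
  · congr 1
    ext i
    fin_cases i <;>
      simp only [Fin.zero_eta, Fin.mk_one, Fin.reduceFinMk, cons_val, Pi.add_apply, Pi.smul_apply,
        smul_eq_mul, zero_add] <;> ring

theorem hasLineDerivAt_ECfun (hΦ : DifferentiableAt ℝ Φ ![0, 0, 1]) (a b : ℝ)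
    (w γ : Fin 3 → ℝ) :
    HasLineDerivAt ℝ (ECfun m l g ρ c Φ)
      (potentialCoeff m l g ρ c * γ 2
        + fderiv ℝ Φ ![0, 0, 1] ![0, ρ * w 2, 2 * γ 2])
      (0, 0, 0, ![0, 0, 1]) (a, b, w, γ) := by
  obtain ⟨A, C, hline⟩ := ECfun_add_smul m l g ρ c Φ a b w γ
  have hcasimir := hΦ.hasFDerivAt.comp_hasDerivAt_of_eq 0
    (hasDerivAt_quadratic_curve ![0, 0, 1] ![0, ρ * w 2, 2 * γ 2] C) (by simp)
  simp only [HasLineDerivAt, hline]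
  exact (hasDerivAt_quadratic_curve _ _ A).add hcasimir

theorem fderiv_ECfun_apply (hΦ : Differentiable ℝ Φ) (a b : ℝ) (w γ : Fin 3 → ℝ) :
    fderiv ℝ (ECfun m l g ρ c Φ) (0, 0, 0, ![0, 0, 1]) (a, b, w, γ) =
      potentialCoeff m l g ρ c * γ 2
        + ρ * w 2 * fderiv ℝ Φ ![0, 0, 1] (Pi.single 1 1)
        + 2 * γ 2 * fderiv ℝ Φ ![0, 0, 1] (Pi.single 2 1) := by
  rw [((differentiable_ECfun m l g ρ c Φ hΦ _).hasFDerivAt.hasLineDerivAt _).unique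
    (hasLineDerivAt_ECfun m l g ρ c Φ (hΦ _) a b w γ), vecCons_three_eq_add_single 0 (ρ * w 2)]
  simp only [map_add, map_smul, smul_eq_mul, zero_mul, zero_add, add_assoc]

end ECfun

theorem sphPend_first_variation_general (m l g ρ c : ℝ)
    (hρ : ρ ≠ 0) (hρm : ρ ≠ m) (Φ : (Fin 3 → ℝ) → ℝ) (hΦ : Differentiable ℝ Φ) :
    fderiv ℝ (ECfun m l g ρ c Φ) (0, 0, 0, ![(0 : ℝ), 0, 1]) = 0 ↔
      (fderiv ℝ Φ ![(0 : ℝ), 0, 1] (Pi.single 1 1) = 0 ∧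
       fderiv ℝ Φ ![(0 : ℝ), 0, 1] (Pi.single 2 1)
          = m * g * l * (m - (1 + c) * ρ) / (2 * (ρ - m))) := by
  have hρm' : ρ - m ≠ 0 := sub_ne_zero.mpr hρm
  have hdE := fderiv_ECfun_apply m l g ρ c Φ hΦ
  constructor
  · intro hcrit
    have hv := hdE 0 0 (Pi.single 2 1) 0
    have hΓ := hdE 0 0 0 (Pi.single 2 1)
    simp only [hcrit, _root_.zero_apply, Pi.single_eq_same, Pi.zero_apply,
      mul_zero, zero_mul, mul_one, add_zero, zero_add] at hv hΓ
    refine ⟨(mul_eq_zero.mp hv.symm).resolve_left hρ, ?_⟩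
    rw [potentialCoeff] at hΓ
    field_simp at hΓ ⊢
    linarith
  · rintro ⟨hD₂, hD₃⟩
    refine ContinuousLinearMap.ext fun ⟨a, b, w, γ⟩ => ?_
    rw [hdE, hD₂, hD₃, _root_.zero_apply, potentialCoeff]
    field_simp
    ring

/-- First-variation conditions for the spherical pendulum: the derivative of the
energy–Casimir function vanishes at the upright equilibrium `(0, 0, 0, e₃)` iff
`D₂Φ(0,0,1) = 0` and `D₃Φ(0,0,1) = mgl(m − (1+c)ρ)/(2(ρ−m))`. -/
theorem sphPend_first_variation (m l g ρ c : ℝ) (hm : 0 < m) (hl : 0 < l) (hg : 0 < g)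
    (hρ : ρ ≠ 0) (hρm : ρ ≠ m) (Φ : (Fin 3 → ℝ) → ℝ) (hΦ : Differentiable ℝ Φ) :
    fderiv ℝ (ECfun m l g ρ c Φ) (0, 0, 0, ![(0 : ℝ), 0, 1]) = 0 ↔
      (fderiv ℝ Φ ![(0 : ℝ), 0, 1] (Pi.single 1 1) = 0 ∧
       fderiv ℝ Φ ![(0 : ℝ), 0, 1] (Pi.single 2 1)
          = m * g * l * (m - (1 + c) * ρ) / (2 * (ρ - m))) :=
  sphPend_first_variation_general m l g ρ c hρ hρm Φ hΦ
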